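/- Automatic boundedness of formal multipliers: let F and F' be complex Hilbert spaces with F' finite-dimensional, let (H, (π_n)_{n ∈ ℤ^d}) and (H', (π'_n)_{n ∈ ℤ^d}) be coefficient data of formal reproducing kernel Hilbert spaces with coefficient spaces F and F' respectively, and assume the family (π'_n) is separating. Let S : ℤ^d → L(F, F') be a family of bounded operators and let T : H → H' be a function such that for every f ∈ H and every n ∈ ℤ^d the partial sums Σ_{|m| ≤ M} S(n−m)(π_m f) converge in the norm of F', as M → ∞, to π'_n(T f). Then T is a bounded linear operator from H to H'. -/

import Mathlib

/-!
Each partial sum `f ↦ ∑_{|m| ≤ M} S(n-m)(π_m f)` is a bounded operator `H → F'`, so by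
Banach–Steinhaus the pointwise limit `π'_n ∘ T` is one as well. Because `(π'_n)` separates
points, linearity of all `π'_n ∘ T` forces linearity of `T`, and the graph of `T` is the
intersection of the closed sets `{(f, g) : π'_n (T f) = π'_n g}`; the closed graph theorem
concludes.
-/

open ContinuousLinearMap Filter

/-- The finite "ball" `{ℓ ∈ ℤ^d : |ℓ₁| + ⋯ + |ℓ_d| ≤ L}`. -/
noncomputable def intBall (d L : ℕ) : Finset (Fin d → ℤ) :=
  (Finset.Icc (fun _ => -(L : ℤ)) fun _ => (L : ℤ)).filter fun ℓ => ∑ i, |ℓ i| ≤ (L : ℤ)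

section SeparatingFamily

variable {𝕜 E G F ι : Type*} [NontriviallyNormedField 𝕜]
  [NormedAddCommGroup E] [NormedSpace 𝕜 E] [NormedAddCommGroup G] [NormedSpace 𝕜 G]
  [NormedAddCommGroup F] [NormedSpace 𝕜 F]
  {p : ι → G →L[𝕜] F} {T : E → G} {L : ι → E →L[𝕜] F}

theorem eq_of_separating (hsep : ∀ g, (∀ n, p n g = 0) → g = 0) {x y : G}
    (h : ∀ n, p n x = p n y) : x = y :=
  sub_eq_zero.1 <| hsep _ fun n => by rw [map_sub, h n, sub_self]

def linearMapOfSeparating (hsep : ∀ g, (∀ n, p n g = 0) → g = 0)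
    (hL : ∀ n f, L n f = p n (T f)) : E →ₗ[𝕜] G where
  toFun := T
  map_add' f g := eq_of_separating hsep fun n => by simp only [map_add, ← hL]
  map_smul' c f := eq_of_separating hsep fun n => by simp only [map_smul, ← hL, RingHom.id_apply]

theorem isClosed_graph_linearMapOfSeparating (hsep : ∀ g, (∀ n, p n g = 0) → g = 0)
    (hL : ∀ n f, L n f = p n (T f)) :
    IsClosed ((linearMapOfSeparating hsep hL).graph : Set (E × G)) := by
  have hgraph : ((linearMapOfSeparating hsep hL).graph : Set (E × G)) =
      ⋂ n, {q | L n q.1 = p n q.2} := by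
    ext ⟨f, g⟩
    simp only [SetLike.mem_coe, LinearMap.mem_graph_iff, Set.mem_iInter, Set.mem_ofPred_eq, hL]
    exact ⟨fun h n => by rw [h]; rfl, fun h => eq_of_separating hsep fun n => (h n).symm⟩
  rw [hgraph]
  exact isClosed_iInter fun n => isClosed_eq (L n).continuous.fst' (p n).continuous.snd'

theorem isBoundedLinearMap_of_separating [CompleteSpace E] [CompleteSpace G]
    (hsep : ∀ g, (∀ n, p n g = 0) → g = 0) (hL : ∀ n f, L n f = p n (T f)) :
    IsBoundedLinearMap 𝕜 T :=
  (ContinuousLinearMap.ofIsClosedGraph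
    (isClosed_graph_linearMapOfSeparating hsep hL)).isBoundedLinearMap

end SeparatingFamily

noncomputable def convolutionPartialSum {𝕜 H F F' : Type*} [NontriviallyNormedField 𝕜]
    [NormedAddCommGroup H] [NormedSpace 𝕜 H] [NormedAddCommGroup F] [NormedSpace 𝕜 F]
    [NormedAddCommGroup F'] [NormedSpace 𝕜 F'] {d : ℕ}
    (S : (Fin d → ℤ) → F →L[𝕜] F') (π : (Fin d → ℤ) → H →L[𝕜] F) (n : Fin d → ℤ) (M : ℕ) :
    H →L[𝕜] F' :=
  ∑ m ∈ intBall d M, (S (n - m)).comp (π m)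

theorem multiplier_automatically_bounded
    {d : ℕ} {F F' H H' : Type*}
    [NormedAddCommGroup F] [InnerProductSpace ℂ F]
    [NormedAddCommGroup F'] [InnerProductSpace ℂ F']
    [NormedAddCommGroup H] [InnerProductSpace ℂ H] [CompleteSpace H]
    [NormedAddCommGroup H'] [InnerProductSpace ℂ H'] [CompleteSpace H']
    (π : (Fin d → ℤ) → H →L[ℂ] F) (π' : (Fin d → ℤ) → H' →L[ℂ] F')
    (hsep : ∀ g : H', (∀ n, π' n g = 0) → g = 0)
    (S : (Fin d → ℤ) → F →L[ℂ] F')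
    (T : H → H')
    (hT : ∀ (f : H) (n : Fin d → ℤ),
      Tendsto (fun M => ∑ m ∈ intBall d M, S (n - m) (π m f)) atTop (nhds (π' n (T f)))) :
    IsBoundedLinearMap ℂ T := by
  have hlim : ∀ n, Tendsto (fun M f => convolutionPartialSum S π n M f) atTop
      (nhds fun f => π' n (T f)) := fun n =>
    tendsto_pi_nhds.2 fun f => by
      simpa only [convolutionPartialSum, sum_apply, comp_apply] using hT f n
  exact isBoundedLinearMap_of_separating (L := fun n => continuousLinearMapOfTendsto _ (hlim n))
    hsep fun _ _ => rfl
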